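/- Let E be a complex-valued function on three-qubit vectors (functions (Fin 2)³ → ℂ) such that (i) E(κ·v) = κ^h·E(v) for all κ ∈ ℂ and some fixed natural number h, and (ii) E((O₁ ⊗ O₂ ⊗ O₃)·v) = E(v) for every v and all 2×2 complex matrices O₁, O₂, O₃ of determinant 1. Let a, b, c, d ∈ ℂ and let ψ₀, ψ₁ be the halves of the first-qubit decomposition of G_{abcd}. Then for every nonzero ζ ∈ ℂ with E(ζ·ψ₀ + ψ₁) = 0, one also has E((1/ζ)·ψ₀ + ψ₁) = 0, E(−ζ·ψ₀ + ψ₁) = 0 and E((−1/ζ)·ψ₀ + ψ₁) = 0. (The roots of any SL-invariant homogeneous measure evaluated on a G_{abcd} state form a normal system, being closed under ζ ↦ 1/ζ and ζ ↦ −ζ.) -/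
import Mathlib


/-- The index set of three-qubit basis states. -/
abbrev QIdx3 := Fin 2 × Fin 2 × Fin 2

/-- The first half `ψ₀` of the first-qubit decomposition of `G_{abcd}`. -/
noncomputable def psi0 (a b c d : ℂ) : QIdx3 → ℂ := fun x =>
  if x = (0, 0, 0) then (a + d) / 2
  else if x = (0, 1, 1) then (a - d) / 2
  else if x = (1, 0, 1) then (b + c) / 2
  else if x = (1, 1, 0) then (b - c) / 2
  else 0

/-- The second half `ψ₁` of the first-qubit decomposition of `G_{abcd}`. -/
noncomputable def psi1 (a b c d : ℂ) : QIdx3 → ℂ := fun x =>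
  if x = (1, 1, 1) then (a + d) / 2
  else if x = (1, 0, 0) then (a - d) / 2
  else if x = (0, 1, 0) then (b + c) / 2
  else if x = (0, 0, 1) then (b - c) / 2
  else 0

/-- The action of the local operator `O₁ ⊗ O₂ ⊗ O₃` on three-qubit vectors
(multiplication by the Kronecker product matrix). -/
noncomputable def act3 (O₁ O₂ O₃ : Matrix (Fin 2) (Fin 2) ℂ) (v : QIdx3 → ℂ) :
    QIdx3 → ℂ := fun x =>
  ∑ y : QIdx3, O₁ x.1 y.1 * O₂ x.2.1 y.2.1 * O₃ x.2.2 y.2.2 * v y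


noncomputable def Mx : Matrix (Fin 2) (Fin 2) ℂ := !![0, Complex.I; Complex.I, 0]
noncomputable def Mz : Matrix (Fin 2) (Fin 2) ℂ := !![Complex.I, 0; 0, -Complex.I]

lemma Mx_det : Mx.det = 1 := by
  simp [Mx, Matrix.det_fin_two_of, Complex.I_mul_I]

lemma Mz_det : Mz.det = 1 := by
  simp [Mz, Matrix.det_fin_two_of, Complex.I_mul_I]

lemma act3_add (O₁ O₂ O₃ : Matrix (Fin 2) (Fin 2) ℂ) (u v : QIdx3 → ℂ) :
    act3 O₁ O₂ O₃ (u + v) = act3 O₁ O₂ O₃ u + act3 O₁ O₂ O₃ v := by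
  funext x
  simp [act3, mul_add, Finset.sum_add_distrib]

lemma act3_smul (O₁ O₂ O₃ : Matrix (Fin 2) (Fin 2) ℂ) (κ : ℂ) (v : QIdx3 → ℂ) :
    act3 O₁ O₂ O₃ (κ • v) = κ • act3 O₁ O₂ O₃ v := by
  funext x
  simp [act3, Finset.mul_sum, mul_left_comm]

lemma act3_Mx0 (a b c d : ℂ) :
    act3 Mx Mx Mx (psi0 a b c d) = (-Complex.I) • psi1 a b c d := by
  funext ⟨x1, x2, x3⟩
  fin_cases x1 <;> fin_cases x2 <;> fin_cases x3 <;>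
    simp [act3, psi0, psi1, Mx, Fintype.sum_prod_type, Fin.sum_univ_two,
      Prod.ext_iff, Complex.ext_iff]

lemma act3_Mx1 (a b c d : ℂ) :
    act3 Mx Mx Mx (psi1 a b c d) = (-Complex.I) • psi0 a b c d := by
  funext ⟨x1, x2, x3⟩
  fin_cases x1 <;> fin_cases x2 <;> fin_cases x3 <;>
    simp [act3, psi0, psi1, Mx, Fintype.sum_prod_type, Fin.sum_univ_two,
      Prod.ext_iff, Complex.ext_iff]

lemma act3_Mz0 (a b c d : ℂ) :
    act3 Mz Mz Mz (psi0 a b c d) = (-Complex.I) • psi0 a b c d := by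
  funext ⟨x1, x2, x3⟩
  fin_cases x1 <;> fin_cases x2 <;> fin_cases x3 <;>
    simp [act3, psi0, psi1, Mz, Fintype.sum_prod_type, Fin.sum_univ_two,
      Prod.ext_iff, Complex.ext_iff]

lemma act3_Mz1 (a b c d : ℂ) :
    act3 Mz Mz Mz (psi1 a b c d) = Complex.I • psi1 a b c d := by
  funext ⟨x1, x2, x3⟩
  fin_cases x1 <;> fin_cases x2 <;> fin_cases x3 <;>
    simp [act3, psi0, psi1, Mz, Fintype.sum_prod_type, Fin.sum_univ_two,
      Prod.ext_iff, Complex.ext_iff]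

/-- The roots of any SL-invariant homogeneous measure evaluated on a `G_{abcd}` state form
a normal system: they are closed under `ζ ↦ 1/ζ` and `ζ ↦ -ζ`. -/
theorem roots_normal_system (E : (QIdx3 → ℂ) → ℂ) (h : ℕ)
    (hhom : ∀ (κ : ℂ) (v : QIdx3 → ℂ), E (κ • v) = κ ^ h * E v)
    (hinv : ∀ O₁ O₂ O₃ : Matrix (Fin 2) (Fin 2) ℂ,
      O₁.det = 1 → O₂.det = 1 → O₃.det = 1 →
      ∀ v : QIdx3 → ℂ, E (act3 O₁ O₂ O₃ v) = E v)
    (a b c d : ℂ) (ζ : ℂ) (hζ : ζ ≠ 0)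
    (h0 : E (ζ • psi0 a b c d + psi1 a b c d) = 0) :
    E ((1 / ζ) • psi0 a b c d + psi1 a b c d) = 0 ∧
    E ((-ζ) • psi0 a b c d + psi1 a b c d) = 0 ∧
    E ((-(1 / ζ)) • psi0 a b c d + psi1 a b c d) = 0 := by
  set ψ₀ := psi0 a b c d
  set ψ₁ := psi1 a b c d
  have key_neg : ∀ z : ℂ, E (z • ψ₀ + ψ₁) = 0 → E ((-z) • ψ₀ + ψ₁) = 0 := by
    intro z hz
    have e := hinv Mz Mz Mz Mz_det Mz_det Mz_det (z • ψ₀ + ψ₁)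
    rw [act3_add, act3_smul, act3_Mz0, act3_Mz1] at e
    have e2 : z • ((-Complex.I) • ψ₀) + Complex.I • ψ₁
        = Complex.I • ((-z) • ψ₀ + ψ₁) := by
      funext x
      simp [smul_eq_mul]
      ring
    rw [e2, hhom, hz] at e
    have hI : (Complex.I : ℂ) ^ h ≠ 0 := pow_ne_zero _ Complex.I_ne_zero
    exact (mul_eq_zero.mp e).resolve_left hI
  have key_inv : E ((1 / ζ) • ψ₀ + ψ₁) = 0 := by
    have e := hinv Mx Mx Mx Mx_det Mx_det Mx_det (ζ • ψ₀ + ψ₁)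
    rw [act3_add, act3_smul, act3_Mx0, act3_Mx1] at e
    have e2 : ζ • ((-Complex.I) • ψ₁) + (-Complex.I) • ψ₀
        = ((-Complex.I) * ζ) • ((1 / ζ) • ψ₀ + ψ₁) := by
      funext x
      simp [smul_eq_mul, mul_add]
      field_simp
      ring
    rw [e2, hhom, h0] at e
    have hI : ((-Complex.I) * ζ) ^ h ≠ 0 :=
      pow_ne_zero _ (mul_ne_zero (neg_ne_zero.mpr Complex.I_ne_zero) hζ)
    exact (mul_eq_zero.mp e).resolve_left hI
  exact ⟨key_inv, key_neg ζ h0, key_neg (1 / ζ) key_inv⟩
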